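/- Every strongly piecewise-Bohr₀ subset of ℤ is syndetic. -/

import Mathlib

/-!
A Bohr₀-set contains the return times `{n | n • α ∈ U}` of a rotation on a compact group to a
neighbourhood of `0`. By compactness, finitely many of the open sets `U + n • α` cover the orbit
closure of `α`, so finitely many translates of the return-time set cover `ℤ`: Bohr₀-sets are
syndetic. If `A` were not syndetic it would miss intervals `J_k` of every length; the intervals
`I_j ⊆ J_k` provided by the strong piecewise property eventually exceed the gap bound of the
syndetic set `Λ`, so `Λ ∩ I_j ⊆ A` is nonempty, a contradiction.
-/

/-- `S ⊆ ℤ` is syndetic: some `N > 0` is such that every interval of `N` consecutive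
integers meets `S`. -/
def SyndeticZ (S : Set ℤ) : Prop :=
  ∃ N : ℕ, 0 < N ∧ ∀ a : ℤ, ∃ s ∈ S, a ≤ s ∧ s < a + N

/-- `A ⊆ ℤ` is a Bohr₀-set. -/
def IsBohr0 (A : Set ℤ) : Prop :=
  ∃ m : ℕ, 0 < m ∧ ∃ (α : Fin m → AddCircle (1 : ℝ)) (U : Set (Fin m → AddCircle (1 : ℝ))),
    IsOpen U ∧ (0 : Fin m → AddCircle (1 : ℝ)) ∈ U ∧
    { n : ℤ | (fun i => n • α i) ∈ U } ⊆ A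

/-- `A` is strongly piecewise-`F`. -/
def StronglyPW (F : Set (Set ℤ)) (A : Set ℤ) : Prop :=
  ∀ aJ bJ : ℕ → ℤ,
    Filter.Tendsto (fun k => bJ k - aJ k) Filter.atTop Filter.atTop →
    ∃ aI bI : ℕ → ℤ,
      (∀ j, ∃ k, Set.Icc (aI j) (bI j) ⊆ Set.Icc (aJ k) (bJ k)) ∧
      Filter.Tendsto (fun j => bI j - aI j) Filter.atTop Filter.atTop ∧
      ∃ Λ ∈ F, ∀ j, Λ ∩ Set.Icc (aI j) (bI j) ⊆ A

theorem SyndeticZ.mono {S T : Set ℤ} (hST : S ⊆ T) (hS : SyndeticZ S) : SyndeticZ T := by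
  obtain ⟨N, hN, h⟩ := hS
  refine ⟨N, hN, fun a => ?_⟩
  obtain ⟨s, hs, hle, hlt⟩ := h a
  exact ⟨s, hST hs, hle, hlt⟩

theorem SyndeticZ.exists_mem_Icc {S : Set ℤ} (hS : SyndeticZ S) :
    ∃ N : ℕ, ∀ a b : ℤ, (N : ℤ) ≤ b - a → ∃ s ∈ S, s ∈ Set.Icc a b := by
  obtain ⟨N, -, h⟩ := hS
  refine ⟨N, fun a b hab => ?_⟩
  obtain ⟨s, hs, hle, hlt⟩ := h a
  exact ⟨s, hs, hle, by omega⟩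

theorem exists_Icc_disjoint_of_not_syndeticZ {S : Set ℤ} (hS : ¬SyndeticZ S) (k : ℕ) :
    ∃ a : ℤ, Disjoint S (Set.Icc a (a + k)) := by
  by_contra! h
  refine hS ⟨k + 1, k.succ_pos, fun a => ?_⟩
  obtain ⟨s, hsS, hs⟩ := Set.not_disjoint_iff.mp (h a)
  exact ⟨s, hsS, hs.1, by push_cast; linarith [hs.2]⟩

theorem syndeticZ_of_forall_exists_sub_mem {S : Set ℤ} (t : Finset ℤ)
    (h : ∀ a : ℤ, ∃ n ∈ t, a - n ∈ S) : SyndeticZ S := by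
  have ht : t.Nonempty := by
    obtain ⟨n, hn, -⟩ := h 0
    exact ⟨n, hn⟩
  have hmin_le_max : t.min' ht ≤ t.max' ht := t.min'_le _ (t.max'_mem ht)
  refine ⟨(t.max' ht - t.min' ht + 1).toNat, by omega, fun a => ?_⟩
  obtain ⟨n, hn, hmem⟩ := h (a + t.max' ht)
  have hn_le : n ≤ t.max' ht := t.le_max' _ hn
  have hle_n : t.min' ht ≤ n := t.min'_le _ hn
  exact ⟨_, hmem, by omega, by omega⟩

section ReturnTimes

variable {G : Type*} [AddGroup G] [TopologicalSpace G] [IsTopologicalAddGroup G] [CompactSpace G]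

theorem exists_finset_forall_exists_sub_zsmul_mem (x : G) {U : Set G} (hU : IsOpen U)
    (h0 : (0 : G) ∈ U) : ∃ t : Finset ℤ, ∀ a : ℤ, ∃ n ∈ t, (a - n) • x ∈ U := by
  let K := closure (Set.range fun n : ℤ => n • x)
  have hcover : K ⊆ ⋃ n : ℤ, (· - n • x) ⁻¹' U := by
    intro y hy
    have hnhd : IsOpen ((y - ·) ⁻¹' U) := hU.preimage (continuous_const.sub continuous_id)
    obtain ⟨-, hyn, n, rfl⟩ := mem_closure_iff.mp hy _ hnhd (by simpa using h0)
    exact Set.mem_iUnion.mpr ⟨n, hyn⟩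
  obtain ⟨t, ht⟩ := isClosed_closure.isCompact.elim_finite_subcover _
    (fun n => hU.preimage (continuous_sub_right _)) hcover
  refine ⟨t, fun a => ?_⟩
  obtain ⟨n, hn, hmem⟩ := Set.mem_iUnion₂.mp (ht (subset_closure ⟨a, rfl⟩))
  exact ⟨n, hn, by rw [sub_zsmul, ← sub_eq_add_neg]; exact hmem⟩

theorem syndeticZ_setOf_zsmul_mem (x : G) {U : Set G} (hU : IsOpen U) (h0 : (0 : G) ∈ U) :
    SyndeticZ {n : ℤ | n • x ∈ U} :=
  let ⟨t, ht⟩ := exists_finset_forall_exists_sub_zsmul_mem x hU h0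
  syndeticZ_of_forall_exists_sub_mem t ht

end ReturnTimes

theorem IsBohr0.syndeticZ {A : Set ℤ} (h : IsBohr0 A) : SyndeticZ A := by
  obtain ⟨m, -, α, U, hU, h0, hsub⟩ := h
  exact (syndeticZ_setOf_zsmul_mem α hU h0).mono hsub

theorem StronglyPW.syndeticZ {F : Set (Set ℤ)} (hF : ∀ B ∈ F, SyndeticZ B) {A : Set ℤ}
    (hA : StronglyPW F A) : SyndeticZ A := by
  by_contra hnot
  choose aJ hgap using exists_Icc_disjoint_of_not_syndeticZ hnot
  obtain ⟨aI, bI, hIJ, hlen, Λ, hΛ, hΛA⟩ :=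
    hA aJ (fun k => aJ k + k) (by simpa using tendsto_natCast_atTop_atTop (R := ℤ))
  obtain ⟨N, hN⟩ := (hF Λ hΛ).exists_mem_Icc
  obtain ⟨j, hj⟩ := (hlen.eventually_ge_atTop (N : ℤ)).exists
  obtain ⟨k, hk⟩ := hIJ j
  obtain ⟨s, hsΛ, hsI⟩ := hN (aI j) (bI j) hj
  exact Set.disjoint_left.mp (hgap k) (hΛA j ⟨hsΛ, hsI⟩) (hk hsI)

/-- Every strongly piecewise-Bohr₀ subset of `ℤ` is syndetic. -/
theorem stronglyPW_bohr0_syndetic (A : Set ℤ)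
    (hA : StronglyPW { B : Set ℤ | IsBohr0 B } A) : SyndeticZ A :=
  hA.syndeticZ fun _ hB => IsBohr0.syndeticZ hB
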